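/- arXiv:2203.10144 — 5 statements merged into one kernel-verified Lean document; each statement's English description precedes it below -/
import Mathlib

section
/- Let E be a real vector space, K ≥ 2 an integer, λ' a real number, η a real number, and M ≥ 1, and let g^{r,m}_k ∈ E (for r ≥ 0, 0 ≤ m ≤ M−1, 1 ≤ k ≤ K) be arbitrary vectors. Define iterates w^{r,m}_k by: w^{0,0}_k = w₀ for all k (the same initial point), w^{r,m+1}_k = w^{r,m}_k − η·g^{r,m}_k for 0 ≤ m ≤ M−1, and w^{r+1,0}_k = λ'·w^{r,M}_k + (1−λ')·w̄^{r,M}, where w̄^{r,M} = (1/K)·Σ_{k=1}^K w^{r,M}_k. Then for every r ≥ 0 and every k: w^{r,M}_k − w̄^{r,M} = −η·Σ_{r'=0}^{r} (λ')^{r−r'} · Σ_{m=0}^{M−1} (g^{r',m}_k − ḡ^{r',m}), where ḡ^{r',m} = (1/K)·Σ_{k=1}^K g^{r',m}_k. -/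
private lemma unroll_aux {E : Type*} [AddCommGroup E] [Module ℝ E]
    {K : ℕ} {M : ℕ} {η : ℝ}
    {w : ℕ → ℕ → Fin K → E} {g : ℕ → ℕ → Fin K → E}
    (hlocal : ∀ r, ∀ m < M, ∀ k, w r (m + 1) k = w r m k - η • g r m k)
    (r : ℕ) (k : Fin K) :
    ∀ m ≤ M, w r m k = w r 0 k - η • ∑ j ∈ Finset.range m, g r j k := by
  intro m
  induction m with
  | zero => intro _; simp
  | succ n ih =>
    intro hn
    have hn' : n < M := Nat.lt_of_succ_le hn
    rw [hlocal r n hn' k, ih (le_of_lt hn'), Finset.sum_range_succ, smul_add]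
    abel

/-- SoftPull iterates: deviation from the average after round `r` equals the
`λ'`-discounted accumulation of centered update vectors. -/
theorem stmt_3 {E : Type*} [AddCommGroup E] [Module ℝ E]
    (K : ℕ) (hK : 2 ≤ K) (M : ℕ) (hM : 1 ≤ M) (lam' η : ℝ) (w₀ : E)
    (w : ℕ → ℕ → Fin K → E) (g : ℕ → ℕ → Fin K → E)
    (hinit : ∀ k, w 0 0 k = w₀)
    (hlocal : ∀ r, ∀ m < M, ∀ k, w r (m + 1) k = w r m k - η • g r m k)
    (hmix : ∀ r k, w (r + 1) 0 k =
      lam' • w r M k + (1 - lam') • ((1 / (K : ℝ)) • ∑ k', w r M k')) :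
    ∀ r k, w r M k - (1 / (K : ℝ)) • ∑ k', w r M k' =
      - (η • ∑ r' ∈ Finset.range (r + 1), lam' ^ (r - r') •
          ∑ m ∈ Finset.range M, (g r' m k - (1 / (K : ℝ)) • ∑ k', g r' m k')) := by
  have hK0 : (K : ℝ) ≠ 0 := by positivity
  have hKinv : (1 / (K : ℝ)) * (K : ℝ) = 1 := by field_simp
  -- centered sum of g at round r', client k
  set S : ℕ → Fin K → E := fun r' k =>
    ∑ m ∈ Finset.range M, (g r' m k - (1 / (K : ℝ)) • ∑ k', g r' m k') with hS
  have unroll := unroll_aux hlocal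
  -- deviation at M in terms of deviation at 0
  have hdev : ∀ r k, w r M k - (1 / (K : ℝ)) • ∑ k', w r M k' =
      (w r 0 k - (1 / (K : ℝ)) • ∑ k', w r 0 k') - η • S r k := by
    intro r k
    have h1 : ∀ k', w r M k' = w r 0 k' - η • ∑ j ∈ Finset.range M, g r j k' :=
      fun k' => unroll r k' M le_rfl
    have hsum : ∑ k', w r M k' =
        (∑ k', w r 0 k') - η • ∑ k', ∑ j ∈ Finset.range M, g r j k' := by
      rw [Finset.smul_sum, ← Finset.sum_sub_distrib]
      exact Finset.sum_congr rfl fun k' _ => h1 k'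
    have hSrk : S r k = (∑ m ∈ Finset.range M, g r m k)
        - (1 / (K : ℝ)) • ∑ k', ∑ m ∈ Finset.range M, g r m k' := by
      simp only [hS]
      rw [Finset.sum_sub_distrib, ← Finset.smul_sum, Finset.sum_comm]
    rw [h1 k, hsum, hSrk]
    module
  intro r
  induction r with
  | zero =>
    intro k
    have hdev0 : w 0 0 k - (1 / (K : ℝ)) • ∑ k', w 0 0 k' = 0 := by
      simp only [hinit, Finset.sum_const, Finset.card_univ, Fintype.card_fin]
      rw [← Nat.cast_smul_eq_nsmul (R := ℝ), smul_smul, hKinv, one_smul, sub_self]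
    rw [hdev 0 k, hdev0, zero_sub]
    simp [hS]
  | succ r ih =>
    intro k
    -- deviation at start of round r+1 equals lam' times previous deviation
    have hmix' : w (r + 1) 0 k - (1 / (K : ℝ)) • ∑ k', w (r + 1) 0 k' =
        lam' • (w r M k - (1 / (K : ℝ)) • ∑ k', w r M k') := by
      have hsum : ∑ k', w (r + 1) 0 k' = ∑ k', w r M k' := by
        calc ∑ k', w (r + 1) 0 k'
            = ∑ k', (lam' • w r M k' + (1 - lam') • ((1 / (K : ℝ)) • ∑ k'', w r M k'')) :=
              Finset.sum_congr rfl fun k' _ => hmix r k'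
          _ = lam' • ∑ k', w r M k' +
              (K : ℕ) • ((1 - lam') • ((1 / (K : ℝ)) • ∑ k'', w r M k'')) := by
              rw [Finset.sum_add_distrib, ← Finset.smul_sum, Finset.sum_const,
                Finset.card_univ, Fintype.card_fin]
          _ = ∑ k', w r M k' := by
              rw [← Nat.cast_smul_eq_nsmul (R := ℝ), smul_smul, smul_smul, ← add_smul]
              have h1 : lam' + (K : ℝ) * (1 - lam') * (1 / (K : ℝ)) = 1 := by
                field_simp
                ring
              rw [h1, one_smul]
      rw [hmix r k, hsum]
      module
    rw [hdev (r + 1) k, hmix', ih k]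
    simp only [hS]
    have hT : ∑ r' ∈ Finset.range (r + 1), lam' ^ (r + 1 - r') •
          ∑ m ∈ Finset.range M, (g r' m k - (1 / (K : ℝ)) • ∑ k', g r' m k')
        = lam' • ∑ r' ∈ Finset.range (r + 1), lam' ^ (r - r') •
          ∑ m ∈ Finset.range M, (g r' m k - (1 / (K : ℝ)) • ∑ k', g r' m k') := by
      rw [Finset.smul_sum]
      refine Finset.sum_congr rfl fun r' hr' => ?_
      have h : r' ≤ r := Nat.lt_succ_iff.mp (Finset.mem_range.mp hr')
      rw [smul_smul, ← pow_succ', Nat.succ_sub h]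
    rw [Finset.sum_range_succ (n := r + 1) (f := fun r' => lam' ^ (r + 1 - r') •
          ∑ m ∈ Finset.range M, (g r' m k - (1 / (K : ℝ)) • ∑ k', g r' m k')),
      hT, Nat.sub_self, pow_zero, one_smul, smul_add]
    module
end

section
/- Let E be a real inner product space and consider SoftPull iterates on a probability space: random vectors w^{r,m}_k and g^{r,m}_k (r ≥ 0, 0 ≤ m ≤ M−1, 1 ≤ k ≤ K, K ≥ 2, M ≥ 1) with w^{0,0}_k = w₀ deterministic and identical for all k, w^{r,m+1}_k = w^{r,m}_k − η·g^{r,m}_k, and w^{r+1,0}_k = λ'·w^{r,M}_k + (1−λ')·w̄^{r,M}, where λ' ∈ [0,1) and bars denote uniform averages over k. If (1/K)·Σ_{k=1}^K E‖g^{r',m}_k‖² ≤ 2(G² + σ²) for all r' ≤ r and all m, then (1/K)·Σ_{k=1}^K E‖w^{r,M}_k − w̄^{r,M}‖² ≤ 2M²(G² + σ²)η²·((1 − (λ')^{r+1})/(1 − λ'))². -/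
/-!
Centering across clients, `v ↦ v - uniformAverage v`, is linear, kills constant families and
turns the SoftPull mixing step into multiplication by `λ'`. Hence the deviation after round `r`
is `-η ∑_{j ≤ r} λ'^j ∑_m ĝ^{r-j,m}`, with `ĝ` the centred gradients. Weighted Cauchy–Schwarz
with weights `λ'^j` (total `S = ∑_{j ≤ r} λ'^j`) and plain Cauchy–Schwarz over the `M` local
steps bound its squared norm by `η² M S ∑_j λ'^j ∑_m ‖ĝ^{r-j,m}‖²`; centering does not increase
the sum of squared norms over clients, and integrating against the second-moment bound gives
`2 M² (G² + σ²) η² S²`.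
-/

open MeasureTheory Finset

theorem eq_sub_smul_sum_range_of_forall_lt {R V : Type*} [Ring R] [AddCommGroup V] [Module R V]
    {M : ℕ} {η : R} {x u : ℕ → V} (h : ∀ m < M, x (m + 1) = x m - η • u m) :
    x M = x 0 - η • ∑ m ∈ range M, u m := by
  have hdiff : x M - x 0 = -(η • ∑ m ∈ range M, u m) := by
    rw [← sum_range_sub, smul_sum, ← sum_neg_distrib]
    exact sum_congr rfl fun m hm => by rw [h m (mem_range.1 hm)]; abel
  rw [sub_eq_iff_eq_add'.1 hdiff]
  abel

theorem eq_sum_range_pow_smul_of_eq_smul_add {R V : Type*} [Semiring R] [AddCommMonoid V]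
    [Module R V] {a : R} {x u : ℕ → V} (h0 : x 0 = u 0)
    (hsucc : ∀ n, x (n + 1) = a • x n + u (n + 1)) (n : ℕ) :
    x n = ∑ j ∈ range (n + 1), a ^ j • u (n - j) := by
  induction n with
  | zero => simp [h0]
  | succ n ih =>
    rw [sum_range_succ', hsucc, ih, smul_sum]
    simp [pow_succ', mul_smul]

theorem norm_sum_smul_sq_le {ι V : Type*} [SeminormedAddCommGroup V] [NormedSpace ℝ V]
    (s : Finset ι) {c : ι → ℝ} (hc : ∀ i ∈ s, 0 ≤ c i) (v : ι → V) :
    ‖∑ i ∈ s, c i • v i‖ ^ 2 ≤ (∑ i ∈ s, c i) * ∑ i ∈ s, c i * ‖v i‖ ^ 2 := by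
  have htri : ‖∑ i ∈ s, c i • v i‖ ≤ ∑ i ∈ s, c i * ‖v i‖ :=
    (norm_sum_le _ _).trans_eq <| sum_congr rfl fun i hi => by
      rw [norm_smul, Real.norm_of_nonneg (hc i hi)]
  refine (pow_le_pow_left₀ (norm_nonneg _) htri 2).trans ?_
  exact sum_sq_le_sum_mul_sum_of_sq_le_mul s hc
    (fun i hi => mul_nonneg (hc i hi) (sq_nonneg _)) fun i _ => le_of_eq (by ring)

theorem norm_sum_sq_le_card_mul {ι V : Type*} [SeminormedAddCommGroup V] [NormedSpace ℝ V]
    (s : Finset ι) (v : ι → V) : ‖∑ i ∈ s, v i‖ ^ 2 ≤ #s * ∑ i ∈ s, ‖v i‖ ^ 2 := by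
  simpa using norm_sum_smul_sq_le s (fun _ _ => zero_le_one) v

noncomputable section Averaging

variable {ι V : Type*} [Fintype ι]

section Module

variable [AddCommGroup V] [Module ℝ V]

def uniformAverage : (ι → V) →ₗ[ℝ] V := (1 / (Fintype.card ι : ℝ)) • ∑ i, LinearMap.proj i

theorem uniformAverage_apply (v : ι → V) :
    uniformAverage v = (1 / (Fintype.card ι : ℝ)) • ∑ i, v i := by
  simp [uniformAverage]

theorem uniformAverage_fin {K : ℕ} (v : Fin K → V) :
    uniformAverage v = (1 / (K : ℝ)) • ∑ k, v k := by
  rw [uniformAverage_apply, Fintype.card_fin]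

theorem sum_eq_card_smul_uniformAverage (v : ι → V) :
    ∑ i, v i = (Fintype.card ι : ℝ) • uniformAverage v := by
  rcases isEmpty_or_nonempty ι with hι | hι
  · simp
  · rw [uniformAverage_apply, smul_smul, mul_one_div_cancel (by positivity), one_smul]

def deviation : (ι → V) →ₗ[ℝ] (ι → V) := LinearMap.id - LinearMap.pi fun _ => uniformAverage

theorem deviation_apply (v : ι → V) (i : ι) : deviation v i = v i - uniformAverage v := rfl

theorem deviation_const (c : V) : deviation (fun _ : ι => c) = 0 := by
  funext i
  have : Nonempty ι := ⟨i⟩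
  have hcard : (Fintype.card ι : ℝ) ≠ 0 := Nat.cast_ne_zero.2 Fintype.card_ne_zero
  rw [deviation_apply, uniformAverage_apply, sum_const, card_univ, ← Nat.cast_smul_eq_nsmul ℝ,
    smul_smul, one_div_mul_cancel hcard, one_smul, sub_self, Pi.zero_apply]

theorem deviation_mix (a : ℝ) (v : ι → V) :
    deviation (a • v + (1 - a) • fun _ => uniformAverage v) = a • deviation v := by
  rw [map_add, map_smul, map_smul, deviation_const, smul_zero, add_zero]

end Module

variable [NormedAddCommGroup V] [InnerProductSpace ℝ V]

theorem sum_norm_deviation_sq_le (v : ι → V) :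
    ∑ i, ‖deviation v i‖ ^ 2 ≤ ∑ i, ‖v i‖ ^ 2 := by
  set b := uniformAverage v
  calc ∑ i, ‖deviation v i‖ ^ 2
      = ∑ i, ‖v i‖ ^ 2 - 2 * inner ℝ (∑ i, v i) b + Fintype.card ι * ‖b‖ ^ 2 := by
        simp_rw [deviation_apply, norm_sub_sq_real]
        rw [sum_add_distrib, sum_sub_distrib, sum_inner, mul_sum, sum_const, card_univ,
          nsmul_eq_mul]
    _ = ∑ i, ‖v i‖ ^ 2 - Fintype.card ι * ‖b‖ ^ 2 := by
        rw [sum_eq_card_smul_uniformAverage v, real_inner_smul_left, real_inner_self_eq_norm_sq]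
        ring
    _ ≤ ∑ i, ‖v i‖ ^ 2 := sub_le_self _ (by positivity)

theorem sum_norm_sum_deviation_sq_le {α : Type*} (s : Finset α) (v : α → ι → V) :
    ∑ i, ‖∑ m ∈ s, deviation (v m) i‖ ^ 2 ≤ #s * ∑ m ∈ s, ∑ i, ‖v m i‖ ^ 2 :=
  calc ∑ i, ‖∑ m ∈ s, deviation (v m) i‖ ^ 2
      ≤ ∑ i, #s * ∑ m ∈ s, ‖deviation (v m) i‖ ^ 2 :=
        sum_le_sum fun i _ => norm_sum_sq_le_card_mul s _
    _ = #s * ∑ m ∈ s, ∑ i, ‖deviation (v m) i‖ ^ 2 := by rw [← mul_sum, sum_comm]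
    _ ≤ #s * ∑ m ∈ s, ∑ i, ‖v m i‖ ^ 2 := by
        gcongr _ * ∑ m ∈ s, ?_ with m
        exact sum_norm_deviation_sq_le (v m)

end Averaging

section SoftPull

variable {ι E : Type*} [Fintype ι] {M : ℕ} {lam' η : ℝ} {w₀ : E} {w g : ℕ → ℕ → ι → E}

theorem softPull_deviation_eq [AddCommGroup E] [Module ℝ E] (hinit : ∀ k, w 0 0 k = w₀)
    (hlocal : ∀ r, ∀ m < M, ∀ k, w r (m + 1) k = w r m k - η • g r m k)
    (hmix : ∀ r k, w (r + 1) 0 k = lam' • w r M k + (1 - lam') • uniformAverage (w r M))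
    (r : ℕ) :
    deviation (w r M) =
      ∑ j ∈ range (r + 1), lam' ^ j • (-η) • ∑ m ∈ range M, deviation (g (r - j) m) := by
  have hround : ∀ r, deviation (w r M) =
      deviation (w r 0) + (-η) • ∑ m ∈ range M, deviation (g r m) := fun r => by
    rw [eq_sub_smul_sum_range_of_forall_lt (x := w r) (u := g r) (η := η)
      fun m hm => funext (hlocal r m hm), map_sub, map_smul, map_sum, neg_smul, sub_eq_add_neg]
  refine eq_sum_range_pow_smul_of_eq_smul_add (x := fun r => deviation (w r M))
    (u := fun s => (-η) • ∑ m ∈ range M, deviation (g s m)) ?_ ?_ r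
  · rw [hround, show w 0 0 = fun _ => w₀ from funext hinit, deviation_const, zero_add]
  · intro n
    rw [hround, show w (n + 1) 0 = lam' • w n M + (1 - lam') • fun _ => uniformAverage (w n M)
      from funext (hmix n), deviation_mix]

theorem softPull_mean_sq_deviation_le [NormedAddCommGroup E] [InnerProductSpace ℝ E]
    (hlam' : 0 ≤ lam') (hinit : ∀ k, w 0 0 k = w₀)
    (hlocal : ∀ r, ∀ m < M, ∀ k, w r (m + 1) k = w r m k - η • g r m k)
    (hmix : ∀ r k, w (r + 1) 0 k = lam' • w r M k + (1 - lam') • uniformAverage (w r M))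
    (r : ℕ) :
    (1 / (Fintype.card ι : ℝ)) * ∑ k, ‖deviation (w r M) k‖ ^ 2 ≤
      η ^ 2 * M * (∑ j ∈ range (r + 1), lam' ^ j) * ∑ j ∈ range (r + 1), lam' ^ j *
        ∑ m ∈ range M, (1 / (Fintype.card ι : ℝ)) * ∑ k, ‖g (r - j) m k‖ ^ 2 := by
  set S := ∑ j ∈ range (r + 1), lam' ^ j
  set y : ℕ → ι → E := fun s => ∑ m ∈ range M, deviation (g s m)
  have hpoint : ∀ k, ‖deviation (w r M) k‖ ^ 2 ≤
      S * ∑ j ∈ range (r + 1), lam' ^ j * (η ^ 2 * ‖y (r - j) k‖ ^ 2) := fun k => by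
    rw [softPull_deviation_eq hinit hlocal hmix, Finset.sum_apply]
    refine (norm_sum_smul_sq_le _ (fun j _ => pow_nonneg hlam' j) _).trans_eq ?_
    simp only [Pi.smul_apply, norm_smul, mul_pow, norm_neg, Real.norm_eq_abs, sq_abs, y, S]
  have hy : ∀ s, ∑ k, ‖y s k‖ ^ 2 ≤ M * ∑ m ∈ range M, ∑ k, ‖g s m k‖ ^ 2 := fun s => by
    simpa [y] using sum_norm_sum_deviation_sq_le (range M) (g s)
  calc (1 / (Fintype.card ι : ℝ)) * ∑ k, ‖deviation (w r M) k‖ ^ 2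
      ≤ (1 / (Fintype.card ι : ℝ)) *
          ∑ k, S * ∑ j ∈ range (r + 1), lam' ^ j * (η ^ 2 * ‖y (r - j) k‖ ^ 2) := by
        gcongr with k
        exact hpoint k
    _ = η ^ 2 * S * ∑ j ∈ range (r + 1), lam' ^ j *
          ((1 / (Fintype.card ι : ℝ)) * ∑ k, ‖y (r - j) k‖ ^ 2) := by
        rw [← mul_sum, sum_comm]
        simp only [mul_sum]
        exact sum_congr rfl fun j _ => sum_congr rfl fun k _ => by ring
    _ ≤ η ^ 2 * S * ∑ j ∈ range (r + 1), lam' ^ j *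
          ((1 / (Fintype.card ι : ℝ)) * (M * ∑ m ∈ range M, ∑ k, ‖g (r - j) m k‖ ^ 2)) := by
        gcongr with j
        exact hy (r - j)
    _ = _ := by
        simp only [mul_sum]
        exact sum_congr rfl fun j _ => sum_congr rfl fun m _ => sum_congr rfl fun k _ => by ring

theorem softPull_integral_mean_sq_deviation_le [NormedAddCommGroup E] [InnerProductSpace ℝ E]
    {Ω : Type*} [MeasurableSpace Ω] {μ : Measure Ω}
    {w g : ℕ → ℕ → ι → Ω → E} (hlam' : 0 ≤ lam') (hinit : ∀ k ω, w 0 0 k ω = w₀)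
    (hlocal : ∀ r, ∀ m < M, ∀ k ω, w r (m + 1) k ω = w r m k ω - η • g r m k ω)
    (hmix : ∀ r k ω,
      w (r + 1) 0 k ω = lam' • w r M k ω + (1 - lam') • uniformAverage (w r M · ω))
    {r : ℕ} (hgI : ∀ s ≤ r, ∀ m < M, ∀ k, Integrable (fun ω => ‖g s m k ω‖ ^ 2) μ)
    (hdevI : ∀ k, Integrable (fun ω => ‖deviation (w r M · ω) k‖ ^ 2) μ) :
    (1 / (Fintype.card ι : ℝ)) * ∑ k, ∫ ω, ‖deviation (w r M · ω) k‖ ^ 2 ∂μ ≤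
      η ^ 2 * M * (∑ j ∈ range (r + 1), lam' ^ j) * ∑ j ∈ range (r + 1), lam' ^ j *
        ∑ m ∈ range M, (1 / (Fintype.card ι : ℝ)) * ∑ k, ∫ ω, ‖g (r - j) m k ω‖ ^ 2 ∂μ := by
  have hmeanI : ∀ j ∈ range (r + 1), ∀ m ∈ range M,
      Integrable (fun ω => (1 / (Fintype.card ι : ℝ)) * ∑ k, ‖g (r - j) m k ω‖ ^ 2) μ :=
    fun j _ m hm => (integrable_finsetSum _ fun k _ =>
      hgI _ (Nat.sub_le r j) m (mem_range.1 hm) k).const_mul _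
  have hroundI : ∀ j ∈ range (r + 1), Integrable (fun ω => lam' ^ j *
      ∑ m ∈ range M, (1 / (Fintype.card ι : ℝ)) * ∑ k, ‖g (r - j) m k ω‖ ^ 2) μ :=
    fun j hj => (integrable_finsetSum _ (hmeanI j hj)).const_mul _
  calc (1 / (Fintype.card ι : ℝ)) * ∑ k, ∫ ω, ‖deviation (w r M · ω) k‖ ^ 2 ∂μ
      = ∫ ω, (1 / (Fintype.card ι : ℝ)) * ∑ k, ‖deviation (w r M · ω) k‖ ^ 2 ∂μ := by
        rw [integral_const_mul, integral_finsetSum _ fun k _ => hdevI k]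
    _ ≤ ∫ ω, η ^ 2 * M * (∑ j ∈ range (r + 1), lam' ^ j) * ∑ j ∈ range (r + 1), lam' ^ j *
          ∑ m ∈ range M, (1 / (Fintype.card ι : ℝ)) * ∑ k, ‖g (r - j) m k ω‖ ^ 2 ∂μ :=
        integral_mono ((integrable_finsetSum _ fun k _ => hdevI k).const_mul _)
          ((integrable_finsetSum _ hroundI).const_mul _) fun ω =>
          softPull_mean_sq_deviation_le (w := (w · · · ω)) hlam' (hinit · ω)
            (hlocal · · · · ω) (hmix · · ω) r
    _ = _ := by
        rw [integral_const_mul, integral_finsetSum _ hroundI]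
        refine congrArg _ (sum_congr rfl fun j hj => ?_)
        rw [integral_const_mul, integral_finsetSum _ (hmeanI j hj)]
        refine congrArg _ (sum_congr rfl fun m hm => ?_)
        rw [integral_const_mul, integral_finsetSum _ fun k _ =>
          hgI _ (Nat.sub_le r j) m (mem_range.1 hm) k]

end SoftPull

theorem stmt_4_general {E : Type*} [NormedAddCommGroup E] [InnerProductSpace ℝ E]
    {Ω : Type*} [MeasurableSpace Ω] (μ : Measure Ω)
    (K M : ℕ) (lam' η G σ : ℝ)
    (hlam'0 : 0 ≤ lam') (hlam'1 : lam' < 1) (w₀ : E)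
    (w g : ℕ → ℕ → Fin K → Ω → E)
    (hinit : ∀ k ω, w 0 0 k ω = w₀)
    (hlocal : ∀ r, ∀ m < M, ∀ k ω, w r (m + 1) k ω = w r m k ω - η • g r m k ω)
    (hmix : ∀ r k ω, w (r + 1) 0 k ω =
      lam' • w r M k ω + (1 - lam') • ((1 / (K : ℝ)) • ∑ k', w r M k' ω))
    (r : ℕ)
    (hgI : ∀ r' ≤ r, ∀ m < M, ∀ k, Integrable (fun ω => ‖g r' m k ω‖ ^ 2) μ)
    (hdevI : ∀ k, Integrable
      (fun ω => ‖w r M k ω - (1 / (K : ℝ)) • ∑ k', w r M k' ω‖ ^ 2) μ)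
    (hbound : ∀ r' ≤ r, ∀ m < M,
      (1 / (K : ℝ)) * ∑ k, ∫ ω, ‖g r' m k ω‖ ^ 2 ∂μ ≤ 2 * (G ^ 2 + σ ^ 2)) :
    (1 / (K : ℝ)) * ∑ k, ∫ ω, ‖w r M k ω - (1 / (K : ℝ)) • ∑ k', w r M k' ω‖ ^ 2 ∂μ ≤
      2 * M ^ 2 * (G ^ 2 + σ ^ 2) * η ^ 2 * ((1 - lam' ^ (r + 1)) / (1 - lam')) ^ 2 := by
  simp only [← uniformAverage_fin] at hmix hdevI ⊢
  have hS : ∑ j ∈ range (r + 1), lam' ^ j = (1 - lam' ^ (r + 1)) / (1 - lam') := by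
    rw [geom_sum_eq hlam'1.ne, ← neg_div_neg_eq, neg_sub, neg_sub]
  have hdev := softPull_integral_mean_sq_deviation_le hlam'0 hinit hlocal hmix hgI hdevI
  rw [Fintype.card_fin] at hdev
  calc _ ≤ _ := hdev
    _ ≤ η ^ 2 * M * (∑ j ∈ range (r + 1), lam' ^ j) *
          ∑ j ∈ range (r + 1), lam' ^ j * ∑ m ∈ range M, 2 * (G ^ 2 + σ ^ 2) := by
        gcongr _ * ∑ j ∈ range (r + 1), _ * ∑ m ∈ range M, ?_ with j _ m hm
        exact hbound _ (Nat.sub_le r j) m (mem_range.1 hm)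
    _ = _ := by
        rw [sum_const, card_range, nsmul_eq_mul, ← sum_mul, hS]
        ring

/-- Expected squared deviation of SoftPull iterates from their average after round `r`,
under the second-moment bound `(1/K)·Σ_k E‖g^{r',m}_k‖² ≤ 2(G²+σ²)`. -/
theorem stmt_4 {E : Type*} [NormedAddCommGroup E] [InnerProductSpace ℝ E]
    {Ω : Type*} [MeasurableSpace Ω] (μ : Measure Ω) [IsProbabilityMeasure μ]
    (K M : ℕ) (hK : 2 ≤ K) (hM : 1 ≤ M) (lam' η G σ : ℝ) (hη : 0 < η)
    (hlam'0 : 0 ≤ lam') (hlam'1 : lam' < 1) (w₀ : E)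
    (w g : ℕ → ℕ → Fin K → Ω → E)
    (hinit : ∀ k ω, w 0 0 k ω = w₀)
    (hlocal : ∀ r, ∀ m < M, ∀ k ω, w r (m + 1) k ω = w r m k ω - η • g r m k ω)
    (hmix : ∀ r k ω, w (r + 1) 0 k ω =
      lam' • w r M k ω + (1 - lam') • ((1 / (K : ℝ)) • ∑ k', w r M k' ω))
    (r : ℕ)
    (hgI : ∀ r' ≤ r, ∀ m < M, ∀ k, Integrable (fun ω => ‖g r' m k ω‖ ^ 2) μ)
    (hdevI : ∀ k, Integrable
      (fun ω => ‖w r M k ω - (1 / (K : ℝ)) • ∑ k', w r M k' ω‖ ^ 2) μ)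
    (hbound : ∀ r' ≤ r, ∀ m < M,
      (1 / (K : ℝ)) * ∑ k, ∫ ω, ‖g r' m k ω‖ ^ 2 ∂μ ≤ 2 * (G ^ 2 + σ ^ 2)) :
    (1 / (K : ℝ)) * ∑ k, ∫ ω, ‖w r M k ω - (1 / (K : ℝ)) • ∑ k', w r M k' ω‖ ^ 2 ∂μ ≤
      2 * M ^ 2 * (G ^ 2 + σ ^ 2) * η ^ 2 * ((1 - lam' ^ (r + 1)) / (1 - lam')) ^ 2 :=
  stmt_4_general μ K M lam' η G σ hlam'0 hlam'1 w₀ w g hinit hlocal hmix r hgI hdevI hbound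
end

section
/- Let E be a real Hilbert space, f : E → ℝ differentiable with L-Lipschitz gradient (L > 0), and 0 < η ≤ 1/L. Let w^0, …, w^M and g^0, …, g^{M−1} be random vectors in E on a probability space with w^{m+1} = w^m − η·g^m, such that for every m: E⟨∇f(w^m), g^m⟩ = E‖∇f(w^m)‖² and E‖g^m − ∇f(w^m)‖² ≤ σ². Then Σ_{m=0}^{M−1} E‖∇f(w^m)‖² ≤ (2/η)·E[f(w^0) − f(w^M)] + M·η·L·σ². -/
open MeasureTheory
open scoped RealInnerProductSpace

/-! Restricting `f` to the segment from `x` to `y`, the Lipschitz gradient gives the descent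
lemma `f y ≤ f x + ⟪∇f x, y - x⟫ + (L/2)‖y - x‖²`. For one step `w' = w - η g` write
`‖g‖² = ‖g - ∇f w‖² + 2⟪∇f w, g⟫ - ‖∇f w‖²`; after taking expectations, unbiasedness turns
every inner product into `E‖∇f w‖²`, so `E f(w) - E f(w') ≥ η (1 - Lη/2) E‖∇f w‖² - Lη²σ²/2`,
which is at least `(η/2) E‖∇f w‖² - Lη²σ²/2` since `Lη ≤ 1`. Summing over the steps telescopes. -/

section Smooth

variable {E : Type*} [NormedAddCommGroup E] [InnerProductSpace ℝ E] [CompleteSpace E]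
  {f : E → ℝ} {f' : E → E} {L : ℝ}

theorem HasGradientAt.hasDerivAt_add_smul {x v g : E} {t : ℝ}
    (h : HasGradientAt f g (x + t • v)) :
    HasDerivAt (fun s : ℝ => f (x + s • v)) ⟪g, v⟫ t := by
  have hline : HasDerivAt (fun s : ℝ => x + s • v) v t := by
    simpa using ((hasDerivAt_id t).smul_const v).const_add x
  simpa [real_inner_comm, Function.comp_def] using h.hasFDerivAt.comp_hasDerivAt t hline

theorem image_le_add_inner_add_sq_of_lipschitz_gradient (hgrad : ∀ x, HasGradientAt f (f' x) x)
    (hlip : ∀ x y, ‖f' x - f' y‖ ≤ L * ‖x - y‖) (x y : E) :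
    f y ≤ f x + ⟪f' x, y - x⟫ + L / 2 * ‖y - x‖ ^ 2 := by
  set v := y - x
  -- `φ` is antitone on `[0, 1]`: its derivative is `⟪f' (x + t • v) - f' x, v⟫ - L t ‖v‖² ≤ 0`.
  set φ : ℝ → ℝ := fun t => f (x + t • v) - t * ⟪f' x, v⟫ - L / 2 * t ^ 2 * ‖v‖ ^ 2
  have hφ' : ∀ t, HasDerivAt φ (⟪f' (x + t • v), v⟫ - ⟪f' x, v⟫ - L * t * ‖v‖ ^ 2) t := by
    intro t
    have hquad : HasDerivAt (fun s : ℝ => L / 2 * s ^ 2 * ‖v‖ ^ 2) (L * t * ‖v‖ ^ 2) t := by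
      have hsq : HasDerivAt (fun s : ℝ => s ^ 2) (2 * t) t := by simpa using hasDerivAt_pow 2 t
      exact ((hsq.const_mul (L / 2)).mul_const (‖v‖ ^ 2)).congr_deriv (by ring)
    exact ((hgrad (x + t • v)).hasDerivAt_add_smul.sub
      ((hasDerivAt_id t).mul_const _ |>.congr_deriv (one_mul _))).sub hquad
  have hderiv_nonpos : ∀ t ∈ interior (Set.Icc (0 : ℝ) 1), deriv φ t ≤ 0 := by
    intro t ht
    rw [interior_Icc] at ht
    rw [(hφ' t).deriv, sub_nonpos, ← inner_sub_left]
    calc ⟪f' (x + t • v) - f' x, v⟫ ≤ ‖f' (x + t • v) - f' x‖ * ‖v‖ := real_inner_le_norm _ _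
      _ ≤ L * ‖(x + t • v) - x‖ * ‖v‖ := by gcongr; exact hlip _ _
      _ = L * t * ‖v‖ ^ 2 := by
        rw [add_sub_cancel_left, norm_smul, Real.norm_of_nonneg ht.1.le]
        ring
  have hanti : AntitoneOn φ (Set.Icc 0 1) :=
    antitoneOn_of_deriv_nonpos (convex_Icc 0 1)
      (fun t _ => (hφ' t).continuousAt.continuousWithinAt)
      (fun t _ => (hφ' t).differentiableAt.differentiableWithinAt) hderiv_nonpos
  have h01 := hanti (Set.left_mem_Icc.2 zero_le_one) (Set.right_mem_Icc.2 zero_le_one)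
    zero_le_one
  simp only [φ, v, zero_smul, add_zero, one_smul, add_sub_cancel] at h01
  linarith

theorem image_sub_smul_le_of_lipschitz_gradient (hgrad : ∀ x, HasGradientAt f (f' x) x)
    (hlip : ∀ x y, ‖f' x - f' y‖ ≤ L * ‖x - y‖) (x g : E) (η : ℝ) :
    f (x - η • g) ≤ f x - η * (1 - L * η) * ⟪f' x, g⟫ - L * η ^ 2 / 2 * ‖f' x‖ ^ 2
      + L * η ^ 2 / 2 * ‖g - f' x‖ ^ 2 := by
  have hdescent := image_le_add_inner_add_sq_of_lipschitz_gradient hgrad hlip x (x - η • g)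
  rw [sub_sub_cancel_left, inner_neg_right, inner_smul_right, norm_neg, norm_smul,
    Real.norm_eq_abs, mul_pow, sq_abs] at hdescent
  have hsq : ‖g - f' x‖ ^ 2 = ‖g‖ ^ 2 - 2 * ⟪f' x, g⟫ + ‖f' x‖ ^ 2 := by
    rw [norm_sub_sq_real, real_inner_comm]
  linear_combination hdescent - L * η ^ 2 / 2 * hsq

end Smooth

theorem sum_range_le_sub_add_nsmul {α : Type*} [AddCommGroup α] [PartialOrder α]
    [IsOrderedAddMonoid α] {a b : ℕ → α} {c : α} {M : ℕ}
    (h : ∀ m < M, a m ≤ b m - b (m + 1) + c) :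
    ∑ m ∈ Finset.range M, a m ≤ b 0 - b M + M • c := by
  calc ∑ m ∈ Finset.range M, a m ≤ ∑ m ∈ Finset.range M, (b m - b (m + 1) + c) :=
        Finset.sum_le_sum fun m hm => h m (Finset.mem_range.1 hm)
    _ = b 0 - b M + M • c := by
        rw [Finset.sum_add_distrib, Finset.sum_range_sub', Finset.sum_const, Finset.card_range]

theorem integral_norm_gradient_sq_le_of_sgd_step {E : Type*} [NormedAddCommGroup E]
    [InnerProductSpace ℝ E] [CompleteSpace E] {Ω : Type*} [MeasurableSpace Ω] {μ : Measure Ω}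
    {f : E → ℝ} {f' : E → E} {L η σ : ℝ} (hL : 0 ≤ L) (hη : 0 < η) (hLη : L * η ≤ 1)
    (hgrad : ∀ x, HasGradientAt f (f' x) x) (hlip : ∀ x y, ‖f' x - f' y‖ ≤ L * ‖x - y‖)
    {X X' G : Ω → E} (hstep : ∀ ω, X' ω = X ω - η • G ω)
    (hfX : Integrable (fun ω => f (X ω)) μ) (hfX' : Integrable (fun ω => f (X' ω)) μ)
    (hinnerI : Integrable (fun ω => ⟪f' (X ω), G ω⟫) μ)
    (hgradI : Integrable (fun ω => ‖f' (X ω)‖ ^ 2) μ)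
    (hvarI : Integrable (fun ω => ‖G ω - f' (X ω)‖ ^ 2) μ)
    (hunbiased : ∫ ω, ⟪f' (X ω), G ω⟫ ∂μ = ∫ ω, ‖f' (X ω)‖ ^ 2 ∂μ)
    (hvar : ∫ ω, ‖G ω - f' (X ω)‖ ^ 2 ∂μ ≤ σ ^ 2) :
    ∫ ω, ‖f' (X ω)‖ ^ 2 ∂μ ≤
      2 / η * (∫ ω, f (X ω) ∂μ - ∫ ω, f (X' ω) ∂μ) + η * L * σ ^ 2 := by
  have hbound : ∫ ω, f (X' ω) ∂μ ≤ ∫ ω, f (X ω) ∂μ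
      - η * (1 - L * η) * ∫ ω, ‖f' (X ω)‖ ^ 2 ∂μ - L * η ^ 2 / 2 * ∫ ω, ‖f' (X ω)‖ ^ 2 ∂μ
      + L * η ^ 2 / 2 * ∫ ω, ‖G ω - f' (X ω)‖ ^ 2 ∂μ := by
    calc ∫ ω, f (X' ω) ∂μ ≤ ∫ ω, (f (X ω) - η * (1 - L * η) * ⟪f' (X ω), G ω⟫
          - L * η ^ 2 / 2 * ‖f' (X ω)‖ ^ 2 + L * η ^ 2 / 2 * ‖G ω - f' (X ω)‖ ^ 2) ∂μ :=
        integral_mono hfX'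
          (((hfX.sub' (hinnerI.const_mul _)).sub' (hgradI.const_mul _)).fun_add
            (hvarI.const_mul _)) fun ω => by
          simpa only [hstep] using image_sub_smul_le_of_lipschitz_gradient hgrad hlip (X ω) (G ω) η
      _ = _ := by
        rw [integral_add ((hfX.sub' (hinnerI.const_mul _)).sub' (hgradI.const_mul _))
            (hvarI.const_mul _), integral_sub (hfX.sub' (hinnerI.const_mul _))
            (hgradI.const_mul _), integral_sub hfX (hinnerI.const_mul _), integral_const_mul,
          integral_const_mul, integral_const_mul, hunbiased]
  have hgrad_nonneg : 0 ≤ ∫ ω, ‖f' (X ω)‖ ^ 2 ∂μ := integral_nonneg fun ω => sq_nonneg _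
  have hhalf : η / 2 * ∫ ω, ‖f' (X ω)‖ ^ 2 ∂μ ≤
      ∫ ω, f (X ω) ∂μ - ∫ ω, f (X' ω) ∂μ + L * η ^ 2 / 2 * σ ^ 2 := by
    nlinarith [mul_le_mul_of_nonneg_left hvar (by positivity : 0 ≤ L * η ^ 2 / 2),
      mul_nonneg (mul_nonneg hη.le hgrad_nonneg) (sub_nonneg.2 hLη)]
  calc ∫ ω, ‖f' (X ω)‖ ^ 2 ∂μ = 2 / η * (η / 2 * ∫ ω, ‖f' (X ω)‖ ^ 2 ∂μ) := by
        field_simp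
    _ ≤ 2 / η * (∫ ω, f (X ω) ∂μ - ∫ ω, f (X' ω) ∂μ + L * η ^ 2 / 2 * σ ^ 2) := by gcongr
    _ = 2 / η * (∫ ω, f (X ω) ∂μ - ∫ ω, f (X' ω) ∂μ) + η * L * σ ^ 2 := by
        field_simp

theorem stmt_8_general {E : Type*} [NormedAddCommGroup E] [InnerProductSpace ℝ E] [CompleteSpace E]
    {Ω : Type*} [MeasurableSpace Ω] (μ : Measure Ω)
    (f : E → ℝ) (f' : E → E) (L η σ : ℝ) (hL : 0 < L)
    (hgrad : ∀ x, HasGradientAt f (f' x) x)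
    (hlip : ∀ x y, ‖f' x - f' y‖ ≤ L * ‖x - y‖)
    (hη0 : 0 < η) (hη1 : η ≤ 1 / L)
    (M : ℕ) (w : ℕ → Ω → E) (g : ℕ → Ω → E)
    (hstep : ∀ m < M, ∀ ω, w (m + 1) ω = w m ω - η • g m ω)
    (hfI : ∀ m ≤ M, Integrable (fun ω => f (w m ω)) μ)
    (hinnerI : ∀ m < M, Integrable (fun ω => ⟪f' (w m ω), g m ω⟫) μ)
    (hgradI : ∀ m < M, Integrable (fun ω => ‖f' (w m ω)‖ ^ 2) μ)
    (hvarI : ∀ m < M, Integrable (fun ω => ‖g m ω - f' (w m ω)‖ ^ 2) μ)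
    (hunbiased : ∀ m < M,
      ∫ ω, ⟪f' (w m ω), g m ω⟫ ∂μ = ∫ ω, ‖f' (w m ω)‖ ^ 2 ∂μ)
    (hvar : ∀ m < M, ∫ ω, ‖g m ω - f' (w m ω)‖ ^ 2 ∂μ ≤ σ ^ 2) :
    ∑ m ∈ Finset.range M, ∫ ω, ‖f' (w m ω)‖ ^ 2 ∂μ ≤
      (2 / η) * ∫ ω, (f (w 0 ω) - f (w M ω)) ∂μ + (M : ℝ) * η * L * σ ^ 2 := by
  have hLη : L * η ≤ 1 := by rwa [le_div_iff₀ hL, mul_comm] at hη1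
  have hdescent : ∀ m < M, ∫ ω, ‖f' (w m ω)‖ ^ 2 ∂μ ≤ 2 / η * ∫ ω, f (w m ω) ∂μ
      - 2 / η * ∫ ω, f (w (m + 1) ω) ∂μ + η * L * σ ^ 2 := fun m hm => by
    rw [← mul_sub]
    exact integral_norm_gradient_sq_le_of_sgd_step hL.le hη0 hLη hgrad hlip (hstep m hm)
      (hfI m hm.le) (hfI (m + 1) hm) (hinnerI m hm) (hgradI m hm) (hvarI m hm) (hunbiased m hm)
      (hvar m hm)
  calc ∑ m ∈ Finset.range M, ∫ ω, ‖f' (w m ω)‖ ^ 2 ∂μ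
      ≤ 2 / η * ∫ ω, f (w 0 ω) ∂μ - 2 / η * ∫ ω, f (w M ω) ∂μ + M • (η * L * σ ^ 2) :=
        sum_range_le_sub_add_nsmul hdescent
    _ = (2 / η) * ∫ ω, (f (w 0 ω) - f (w M ω)) ∂μ + (M : ℝ) * η * L * σ ^ 2 := by
        rw [integral_sub (hfI 0 M.zero_le) (hfI M le_rfl), nsmul_eq_mul]
        ring

/-- `M` steps of stochastic gradient descent on an `L`-smooth function with
conditionally unbiased stochastic gradients of variance at most `σ²` and step size
`0 < η ≤ 1/L`: `Σ_{m<M} E‖∇f(w^m)‖² ≤ (2/η)·E[f(w⁰) − f(w^M)] + MηLσ²`. -/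
theorem stmt_8 {E : Type*} [NormedAddCommGroup E] [InnerProductSpace ℝ E] [CompleteSpace E]
    {Ω : Type*} [MeasurableSpace Ω] (μ : Measure Ω) [IsProbabilityMeasure μ]
    (f : E → ℝ) (f' : E → E) (L η σ : ℝ) (hL : 0 < L)
    (hgrad : ∀ x, HasGradientAt f (f' x) x)
    (hlip : ∀ x y, ‖f' x - f' y‖ ≤ L * ‖x - y‖)
    (hη0 : 0 < η) (hη1 : η ≤ 1 / L)
    (M : ℕ) (w : ℕ → Ω → E) (g : ℕ → Ω → E)
    (hstep : ∀ m < M, ∀ ω, w (m + 1) ω = w m ω - η • g m ω)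
    (hfI : ∀ m ≤ M, Integrable (fun ω => f (w m ω)) μ)
    (hinnerI : ∀ m < M, Integrable (fun ω => ⟪f' (w m ω), g m ω⟫) μ)
    (hgradI : ∀ m < M, Integrable (fun ω => ‖f' (w m ω)‖ ^ 2) μ)
    (hvarI : ∀ m < M, Integrable (fun ω => ‖g m ω - f' (w m ω)‖ ^ 2) μ)
    (hunbiased : ∀ m < M,
      ∫ ω, ⟪f' (w m ω), g m ω⟫ ∂μ = ∫ ω, ‖f' (w m ω)‖ ^ 2 ∂μ)
    (hvar : ∀ m < M, ∫ ω, ‖g m ω - f' (w m ω)‖ ^ 2 ∂μ ≤ σ ^ 2) :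
    ∑ m ∈ Finset.range M, ∫ ω, ‖f' (w m ω)‖ ^ 2 ∂μ ≤
      (2 / η) * ∫ ω, (f (w 0 ω) - f (w M ω)) ∂μ + (M : ℝ) * η * L * σ ^ 2 :=
  stmt_8_general μ f f' L η σ hL hgrad hlip hη0 hη1 M w g hstep hfI hinnerI hgradI hvarI hunbiased
    hvar
end

section
/- Let E be a real Hilbert space, K ≥ 2 an integer, λ ∈ (0, 1], and f_1, …, f_K : E → ℝ differentiable with L-Lipschitz gradients (L > 0). Let w_1, …, w_K ∈ E with w̄ = (1/K)·Σ_{k=1}^K w_k, and let F(v) = Σ_{k'=1}^K f_{k'}((1/λ)·v_{k'} − ((1−λ)/(λ(K−1)))·Σ_{j≠k'} v_j). Then (1/K)·Σ_{k=1}^K ‖∇_{v_k} F(w_1,…,w_K)‖² ≤ 4·(1/λ² + (1−λ)²/(λ²(K−1)))·(1/K)·Σ_{k=1}^K [ ‖∇f_k(w_k)‖² + (L²(1−λ)²K²/(λ²(K−1)²))·‖w_k − w̄‖² ]. -/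
/-!
Write `c = (1-λ)/(λ(K-1))`, `a = 1/λ + c` and `g_k = ∇f_k(u_k)`. Since `u_k` is affine in each
`v_j`, the chain rule gives `∇_{v_k}F = a g_k - c S` with `S = Σ_j g_j`. Expanding the squares,
`Σ_k ‖a g_k - c S‖² = a² Σ_k ‖g_k‖² - c (2a - Kc) ‖S‖² ≤ a² Σ_k ‖g_k‖²`, because `Kc ≤ 2a`.
Smoothness gives `‖g_k‖² ≤ 2 (‖∇f_k(w_k)‖² + L² ‖u_k - w_k‖²)` with `u_k - w_k = cK (w_k - w̄)`,
and finally `2a² ≤ 4 (1/λ² + c²) ≤ 4 (1/λ² + (1-λ)²/(λ²(K-1)))`.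
-/

open Finset

section Gradient

variable {E : Type*} [NormedAddCommGroup E] [InnerProductSpace ℝ E] [CompleteSpace E]

theorem HasGradientAt.comp_add_smul {f : E → ℝ} {g v x : E} {b : ℝ}
    (hf : HasGradientAt f g (v + b • x)) :
    HasGradientAt (fun y => f (v + b • y)) (b • g) x := by
  rw [hasGradientAt_iff_hasFDerivAt] at hf ⊢
  have hlin : HasFDerivAt (fun y : E => v + b • y) (b • ContinuousLinearMap.id ℝ E) x :=
    ((hasFDerivAt_id x).const_smul b).const_add v
  refine (hf.comp x hlin).congr_fderiv ?_
  ext y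
  simp

theorem HasGradientAt.fun_sum {ι : Type*} {s : Finset ι} {f : ι → E → ℝ} {g : ι → E} {x : E}
    (h : ∀ i ∈ s, HasGradientAt (f i) (g i) x) :
    HasGradientAt (fun y => ∑ i ∈ s, f i y) (∑ i ∈ s, g i) x := by
  rw [hasGradientAt_iff_hasFDerivAt]
  exact (HasFDerivAt.fun_sum fun i hi => (h i hi).hasFDerivAt).congr_fderiv (map_sum _ _ _).symm

end Gradient

theorem norm_sq_le_two_mul_of_norm_sub_le {E : Type*} [SeminormedAddCommGroup E] {x y : E} {r : ℝ}
    (h : ‖x - y‖ ≤ r) : ‖x‖ ^ 2 ≤ 2 * (‖y‖ ^ 2 + r ^ 2) := by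
  have hx : ‖x‖ ≤ ‖y‖ + r := (norm_le_norm_add_norm_sub' x y).trans (by linarith)
  nlinarith [norm_nonneg x, sq_nonneg (‖y‖ - r)]

theorem sum_norm_sq_smul_sub_smul_sum_le {ι E : Type*} [Fintype ι] [NormedAddCommGroup E]
    [InnerProductSpace ℝ E] (g : ι → E) {a c : ℝ} (hc : 0 ≤ c)
    (hca : Fintype.card ι * c ≤ 2 * a) :
    ∑ i, ‖a • g i - c • ∑ j, g j‖ ^ 2 ≤ a ^ 2 * ∑ i, ‖g i‖ ^ 2 := by
  set S := ∑ j, g j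
  have hterm : ∀ i, ‖a • g i - c • S‖ ^ 2
      = a ^ 2 * ‖g i‖ ^ 2 - 2 * a * c * inner ℝ (g i) S + c ^ 2 * ‖S‖ ^ 2 := fun i => by
    rw [norm_sub_sq_real, norm_smul, norm_smul, real_inner_smul_left, real_inner_smul_right,
      mul_pow, mul_pow, Real.norm_eq_abs, Real.norm_eq_abs, sq_abs, sq_abs]
    ring
  have hexpand : ∑ i, ‖a • g i - c • S‖ ^ 2
      = a ^ 2 * ∑ i, ‖g i‖ ^ 2 - c * (2 * a - Fintype.card ι * c) * ‖S‖ ^ 2 := by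
    rw [sum_congr rfl fun i _ => hterm i, sum_add_distrib, sum_sub_distrib, ← mul_sum, ← mul_sum,
      ← sum_inner, real_inner_self_eq_norm_sq, sum_const, card_univ, nsmul_eq_mul]
    ring
  have hS : 0 ≤ c * (2 * a - Fintype.card ι * c) * ‖S‖ ^ 2 := by
    have := sub_nonneg.mpr hca
    positivity
  linarith

section SoftPullPoint

variable {ι E : Type*} [Fintype ι] [DecidableEq ι] [AddCommGroup E] [Module ℝ E]

/-- The point `u_k(v)` of the SoftPull objective is `softPullPoint (1/λ) ((1-λ)/(λ(K-1))) v k`. -/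
def softPullPoint (α β : ℝ) (v : ι → E) (k : ι) : E :=
  α • v k - β • ∑ j ∈ univ.erase k, v j

theorem softPullPoint_eq (α β : ℝ) (v : ι → E) (k : ι) :
    softPullPoint α β v k = (α + β) • v k - β • ∑ j, v j := by
  rw [softPullPoint, sum_erase_eq_sub (mem_univ k)]
  module

theorem softPullPoint_update (α β : ℝ) (w : ι → E) (k k' : ι) (x : E) :
    softPullPoint α β (Function.update w k x) k' =
      (softPullPoint α β w k' - (if k' = k then α else -β) • w k) +
        (if k' = k then α else -β) • x := by
  have hsum : ∑ j, Function.update w k x j = ∑ j, w j - w k + x := by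
    rw [sum_update_of_mem (mem_univ k), ← sum_erase_eq_sub (mem_univ k), sdiff_singleton_eq_erase]
    abel
  rw [softPullPoint_eq, softPullPoint_eq, hsum]
  by_cases hk : k' = k
  · subst hk
    simp only [Function.update_self, if_true]
    module
  · simp only [Function.update_of_ne hk, hk, if_false]
    module

theorem softPullPoint_sub_self {α β : ℝ} (h : α - 1 = β * (Fintype.card ι - 1)) (w : ι → E)
    (k : ι) :
    softPullPoint α β w k - w k =
      (β * Fintype.card ι) • (w k - (1 / (Fintype.card ι : ℝ)) • ∑ j, w j) := by
  have hcard : (Fintype.card ι : ℝ) ≠ 0 :=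
    Nat.cast_ne_zero.mpr (Fintype.card_pos_iff.mpr ⟨k⟩).ne'
  rw [softPullPoint_eq, smul_sub, smul_smul, mul_assoc, mul_one_div_cancel hcard, mul_one]
  linear_combination (norm := module) h • w k

end SoftPullPoint

section SoftPullGradient

variable {ι E : Type*} [Fintype ι] [DecidableEq ι] [NormedAddCommGroup E] [InnerProductSpace ℝ E]

theorem hasGradientAt_sum_comp_softPullPoint_update [CompleteSpace E] {f : ι → E → ℝ}
    {g : ι → E} {α β : ℝ} {w : ι → E}
    (hf : ∀ k', HasGradientAt (f k') (g k') (softPullPoint α β w k')) (k : ι) :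
    HasGradientAt (fun x => ∑ k', f k' (softPullPoint α β (Function.update w k x) k'))
      ((α + β) • g k - β • ∑ k', g k') (w k) := by
  simp_rw [softPullPoint_update]
  have hcoeff : ∀ k' : ι, (if k' = k then α else -β) = (if k' = k then α + β else 0) - β :=
    fun k' => by split_ifs <;> ring
  have hsum : ∑ k', (if k' = k then α else -β) • g k' = (α + β) • g k - β • ∑ k', g k' := by
    simp_rw [hcoeff, sub_smul, sum_sub_distrib, ite_smul, zero_smul, sum_ite_eq', mem_univ,
      if_true, smul_sum]
  rw [← hsum]
  refine HasGradientAt.fun_sum fun k' _ => HasGradientAt.comp_add_smul ?_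
  rw [sub_add_cancel]
  exact hf k'

theorem norm_sq_comp_softPullPoint_le {f' : E → E} {L α β : ℝ}
    (hlip : ∀ x y, ‖f' x - f' y‖ ≤ L * ‖x - y‖) (h : α - 1 = β * (Fintype.card ι - 1))
    (w : ι → E) (k : ι) :
    ‖f' (softPullPoint α β w k)‖ ^ 2 ≤ 2 * (‖f' (w k)‖ ^ 2 +
      (L * β * Fintype.card ι) ^ 2 * ‖w k - (1 / (Fintype.card ι : ℝ)) • ∑ j, w j‖ ^ 2) := by
  have hdist := hlip (softPullPoint α β w k) (w k)
  rw [softPullPoint_sub_self h, norm_smul, Real.norm_eq_abs] at hdist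
  refine (norm_sq_le_two_mul_of_norm_sub_le hdist).trans_eq ?_
  rw [mul_pow, mul_pow, sq_abs]
  ring

end SoftPullGradient

section SoftPullWeight

variable {lam K : ℝ}

noncomputable def softPullWeight (lam K : ℝ) : ℝ := (1 - lam) / (lam * (K - 1))

theorem softPullWeight_nonneg (hlam0 : 0 < lam) (hlam1 : lam ≤ 1) (hK : 1 < K) :
    0 ≤ softPullWeight lam K :=
  div_nonneg (by linarith) (mul_pos hlam0 (by linarith)).le

theorem one_div_sub_one_eq_softPullWeight_mul (hlam : lam ≠ 0) (hK : K ≠ 1) :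
    1 / lam - 1 = softPullWeight lam K * (K - 1) := by
  have hK1 : K - 1 ≠ 0 := sub_ne_zero.mpr hK
  rw [softPullWeight]
  field_simp

theorem mul_softPullWeight_le (hlam0 : 0 < lam) (hK : 2 ≤ K) :
    K * softPullWeight lam K ≤ 2 * (1 / lam + softPullWeight lam K) := by
  have hK1 : K - 1 ≠ 0 := by linarith
  have hdiff : 2 * (1 / lam + softPullWeight lam K) - K * softPullWeight lam K
      = (2 * (K - 1) - (K - 2) * (1 - lam)) / (lam * (K - 1)) := by
    rw [softPullWeight]
    field_simp
    ring
  rw [← sub_nonneg, hdiff]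
  exact div_nonneg (by nlinarith) (mul_pos hlam0 (by linarith)).le

theorem two_mul_sq_add_softPullWeight_le (hlam0 : 0 < lam) (hK : 2 ≤ K) :
    2 * (1 / lam + softPullWeight lam K) ^ 2 ≤
      4 * (1 / lam ^ 2 + (1 - lam) ^ 2 / (lam ^ 2 * (K - 1))) := by
  have hsq : softPullWeight lam K ^ 2 ≤ (1 - lam) ^ 2 / (lam ^ 2 * (K - 1)) := by
    rw [softPullWeight, div_pow, mul_pow]
    gcongr <;> nlinarith
  nlinarith [sq_nonneg (1 / lam - softPullWeight lam K), one_div_pow lam 2]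

end SoftPullWeight

theorem stmt_16_general {E : Type*} [NormedAddCommGroup E] [InnerProductSpace ℝ E] [CompleteSpace E]
    (K : ℕ) (hK : 2 ≤ K) (lam L : ℝ) (hlam0 : 0 < lam) (hlam1 : lam ≤ 1)
    (f : Fin K → E → ℝ) (f' : Fin K → E → E)
    (hgrad : ∀ k x, HasGradientAt (f k) (f' k x) x)
    (hlip : ∀ k x y, ‖f' k x - f' k y‖ ≤ L * ‖x - y‖)
    (w : Fin K → E) (Fg : Fin K → E)
    (hFg : ∀ k : Fin K,
      HasGradientAt
        (fun x : E => ∑ k', f k'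
          ((1 / lam) • Function.update w k x k' -
            ((1 - lam) / (lam * ((K : ℝ) - 1))) •
              ∑ j ∈ Finset.univ.erase k', Function.update w k x j))
        (Fg k) (w k)) :
    (1 / (K : ℝ)) * ∑ k, ‖Fg k‖ ^ 2 ≤
      4 * (1 / lam ^ 2 + (1 - lam) ^ 2 / (lam ^ 2 * ((K : ℝ) - 1))) *
        ((1 / (K : ℝ)) * ∑ k, (‖f' k (w k)‖ ^ 2 +
          (L ^ 2 * (1 - lam) ^ 2 * (K : ℝ) ^ 2 / (lam ^ 2 * ((K : ℝ) - 1) ^ 2)) *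
            ‖w k - (1 / (K : ℝ)) • ∑ k', w k'‖ ^ 2)) := by
  have hKR : (2 : ℝ) ≤ K := by exact_mod_cast hK
  set c := softPullWeight lam K
  set g := fun k => f' k (softPullPoint (1 / lam) c w k)
  have hFg_eq : ∀ k, Fg k = (1 / lam + c) • g k - c • ∑ k', g k' := fun k =>
    (hFg k).unique (hasGradientAt_sum_comp_softPullPoint_update (fun k' => hgrad k' _) k)
  set R := ∑ k, (‖f' k (w k)‖ ^ 2 +
    (L ^ 2 * (1 - lam) ^ 2 * (K : ℝ) ^ 2 / (lam ^ 2 * ((K : ℝ) - 1) ^ 2)) *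
      ‖w k - (1 / (K : ℝ)) • ∑ k', w k'‖ ^ 2) with hR
  have hR0 : 0 ≤ R := sum_nonneg fun k _ => by positivity
  have hg : ∑ k, ‖g k‖ ^ 2 ≤ 2 * R := by
    have hcoeff : L ^ 2 * (1 - lam) ^ 2 * (K : ℝ) ^ 2 / (lam ^ 2 * ((K : ℝ) - 1) ^ 2)
        = (L * c * K) ^ 2 := by
      simp only [c, softPullWeight, mul_pow, div_pow]
      ring
    rw [hR, mul_sum, hcoeff]
    have hweights : 1 / lam - 1 = c * (Fintype.card (Fin K) - 1) := by
      simpa only [Fintype.card_fin] using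
        one_div_sub_one_eq_softPullWeight_mul hlam0.ne' (by linarith : (K : ℝ) ≠ 1)
    exact sum_le_sum fun k _ => by
      simpa only [Fintype.card_fin] using norm_sq_comp_softPullPoint_le (hlip k) hweights w k
  calc (1 / (K : ℝ)) * ∑ k, ‖Fg k‖ ^ 2 ≤ 1 / K * ((1 / lam + c) ^ 2 * ∑ k, ‖g k‖ ^ 2) := by
        simp_rw [hFg_eq]
        gcongr
        refine sum_norm_sq_smul_sub_smul_sum_le g
          (softPullWeight_nonneg hlam0 hlam1 (by linarith)) ?_
        simpa only [Fintype.card_fin] using mul_softPullWeight_le hlam0 hKR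
    _ ≤ 1 / K * ((1 / lam + c) ^ 2 * (2 * R)) := by gcongr
    _ = 2 * (1 / lam + c) ^ 2 * (1 / K * R) := by ring
    _ ≤ _ := by
        gcongr ?_ * _
        exact two_mul_sq_add_softPullWeight_le hlam0 hKR

/-- Averaged squared partial-gradient bound for the SoftPull objective
`F(v) = Σ_{k'} f_{k'}((1/λ)·v_{k'} − ((1−λ)/(λ(K−1)))·Σ_{j≠k'} v_j)` with `L`-smooth
losses: `(1/K)·Σ_k ‖∇_{v_k}F(w)‖² ≤ 4·(1/λ² + (1−λ)²/(λ²(K−1)))·(1/K)·Σ_k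
[‖∇f_k(w_k)‖² + (L²(1−λ)²K²/(λ²(K−1)²))·‖w_k − w̄‖²]`. -/
theorem stmt_16 {E : Type*} [NormedAddCommGroup E] [InnerProductSpace ℝ E] [CompleteSpace E]
    (K : ℕ) (hK : 2 ≤ K) (lam L : ℝ) (hlam0 : 0 < lam) (hlam1 : lam ≤ 1) (hL : 0 < L)
    (f : Fin K → E → ℝ) (f' : Fin K → E → E)
    (hgrad : ∀ k x, HasGradientAt (f k) (f' k x) x)
    (hlip : ∀ k x y, ‖f' k x - f' k y‖ ≤ L * ‖x - y‖)
    (w : Fin K → E) (Fg : Fin K → E)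
    (hFg : ∀ k : Fin K,
      HasGradientAt
        (fun x : E => ∑ k', f k'
          ((1 / lam) • Function.update w k x k' -
            ((1 - lam) / (lam * ((K : ℝ) - 1))) •
              ∑ j ∈ Finset.univ.erase k', Function.update w k x j))
        (Fg k) (w k)) :
    (1 / (K : ℝ)) * ∑ k, ‖Fg k‖ ^ 2 ≤
      4 * (1 / lam ^ 2 + (1 - lam) ^ 2 / (lam ^ 2 * ((K : ℝ) - 1))) *
        ((1 / (K : ℝ)) * ∑ k, (‖f' k (w k)‖ ^ 2 +
          (L ^ 2 * (1 - lam) ^ 2 * (K : ℝ) ^ 2 / (lam ^ 2 * ((K : ℝ) - 1) ^ 2)) *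
            ‖w k - (1 / (K : ℝ)) • ∑ k', w k'‖ ^ 2)) :=
  stmt_16_general K hK lam L hlam0 hlam1 f f' hgrad hlip w Fg hFg
end

section
/- Let E be a real vector space, K ≥ 2 an integer, λ ∈ (0, 1], and w*_1, …, w*_K ∈ E. Then there exists a unique tuple (w_{p,1}, …, w_{p,K}) ∈ E^K satisfying w_{p,k} = λ·w*_k + ((1−λ)/(K−1))·Σ_{k'≠k} w_{p,k'} for every k ∈ {1,…,K}, and it is given explicitly by w_{p,k} = (λ(K−1)·w*_k + (1−λ)·Σ_{k'=1}^K w*_{k'}) / (K − λ). -/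
/-!
Writing `d = (1 - λ)/(K - 1)` and `T = Σ wp`, the `k`-th equation reads
`(1 + d) • wp k = λ • w*_k + d • T`. Summing over `k` gives `λ • T = λ • Σ w*`, so the
personalized optima have the same sum as the local optima, and each equation can then be
solved for `wp k` separately, since `1 + d = (K - λ)/(K - 1) ≠ 0`.
-/

open Finset

section SoftPull

variable {𝕜 E ι : Type*} [Field 𝕜] [AddCommGroup E] [Module 𝕜 E] [Fintype ι]

theorem eq_smul_add_smul_sum_erase_iff [DecidableEq ι] (c d : 𝕜) (a w : ι → E) (i : ι) :
    w i = c • a i + d • ∑ j ∈ univ.erase i, w j ↔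
      (1 + d) • w i = c • a i + d • ∑ j, w j := by
  rw [sum_erase_eq_sub (mem_univ i)]
  constructor <;> intro h <;> linear_combination (norm := module) h

theorem smul_sum_eq_of_forall_smul_eq (c d : 𝕜) (a w : ι → E)
    (h : ∀ i, (1 + d) • w i = c • a i + d • ∑ j, w j) :
    (1 - d * ((Fintype.card ι : 𝕜) - 1)) • ∑ i, w i = c • ∑ i, a i := by
  have hsum : (1 + d) • ∑ i, w i = c • ∑ i, a i + (Fintype.card ι : 𝕜) • d • ∑ i, w i := by
    rw [smul_sum, sum_congr rfl fun i _ => h i, sum_add_distrib, ← smul_sum,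
      sum_const, card_univ, Nat.cast_smul_eq_nsmul]
  linear_combination (norm := module) hsum

def IsSoftPullOptimum [DecidableEq ι] (lam : 𝕜) (wstar wp : ι → E) : Prop :=
  ∀ k, wp k = lam • wstar k +
    ((1 - lam) / ((Fintype.card ι : 𝕜) - 1)) • ∑ k' ∈ univ.erase k, wp k'

def softPullOptimum (lam : 𝕜) (wstar : ι → E) : ι → E := fun k =>
  ((Fintype.card ι : 𝕜) - lam)⁻¹ •
    ((lam * ((Fintype.card ι : 𝕜) - 1)) • wstar k + (1 - lam) • ∑ k', wstar k')

theorem sum_softPullOptimum {lam : 𝕜} (hKl : (Fintype.card ι : 𝕜) - lam ≠ 0) (wstar : ι → E) :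
    ∑ k, softPullOptimum lam wstar k = ∑ k, wstar k := by
  simp only [softPullOptimum, ← smul_sum, sum_add_distrib, sum_const, card_univ,
    ← Nat.cast_smul_eq_nsmul 𝕜, smul_smul]
  match_scalars
  field_simp
  ring

theorem isSoftPullOptimum_iff [DecidableEq ι] {lam : 𝕜} (hlam : lam ≠ 0)
    (hK1 : (Fintype.card ι : 𝕜) - 1 ≠ 0) (hKl : (Fintype.card ι : 𝕜) - lam ≠ 0) (wstar wp : ι → E) :
    IsSoftPullOptimum lam wstar wp ↔ wp = softPullOptimum lam wstar := by
  set d := (1 - lam) / ((Fintype.card ι : 𝕜) - 1) with hd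
  have h1d : 1 + d = ((Fintype.card ι : 𝕜) - lam) / ((Fintype.card ι : 𝕜) - 1) := by
    rw [hd]; field_simp; ring
  simp only [IsSoftPullOptimum, ← hd, eq_smul_add_smul_sum_erase_iff]
  constructor
  · intro h
    have hsum : ∑ k, wp k = ∑ k, wstar k := by
      have := smul_sum_eq_of_forall_smul_eq _ _ _ _ h
      rw [hd, div_mul_cancel₀ _ hK1, sub_sub_cancel] at this
      exact smul_right_injective E hlam this
    funext k
    have hk := h k
    rw [hsum, h1d, ← eq_inv_smul_iff₀ (div_ne_zero hKl hK1)] at hk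
    rw [hk, softPullOptimum, hd]
    match_scalars <;> field_simp
  · rintro rfl k
    rw [sum_softPullOptimum hKl, h1d, softPullOptimum, hd]
    match_scalars <;> field_simp

end SoftPull

/-- For `λ ∈ (0,1]` the SoftPull fixed-point system
`w_{p,k} = λ·w*_k + ((1−λ)/(K−1))·Σ_{k'≠k} w_{p,k'}` has a unique solution, explicitly
`w_{p,k} = (λ(K−1)·w*_k + (1−λ)·Σ_{k'} w*_{k'}) / (K − λ)`. -/
theorem stmt_18 {E : Type*} [AddCommGroup E] [Module ℝ E]
    (K : ℕ) (hK : 2 ≤ K) (lam : ℝ) (hlam0 : 0 < lam) (hlam1 : lam ≤ 1)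
    (wstar : Fin K → E) :
    (∃! wp : Fin K → E, ∀ k, wp k = lam • wstar k +
      ((1 - lam) / ((K : ℝ) - 1)) • ∑ k' ∈ Finset.univ.erase k, wp k') ∧
    ∀ wp : Fin K → E,
      (∀ k, wp k = lam • wstar k +
        ((1 - lam) / ((K : ℝ) - 1)) • ∑ k' ∈ Finset.univ.erase k, wp k') →
      ∀ k, wp k = ((K : ℝ) - lam)⁻¹ •
        ((lam * ((K : ℝ) - 1)) • wstar k + (1 - lam) • ∑ k', wstar k') := by
  have hK2 : (2 : ℝ) ≤ K := by exact_mod_cast hK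
  have hiff := isSoftPullOptimum_iff (ι := Fin K) hlam0.ne'
    (by rw [Fintype.card_fin]; linarith) (by rw [Fintype.card_fin]; linarith) wstar
  simp only [IsSoftPullOptimum, softPullOptimum, Fintype.card_fin, funext_iff] at hiff
  exact ⟨⟨_, (hiff _).2 fun _ => rfl, fun wp h => funext ((hiff wp).1 h)⟩,
    fun wp h => (hiff wp).1 h⟩
end
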